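/- arXiv:1209.5932 — 3 statements merged into one kernel-verified Lean document; each statement's English description precedes it below -/
import Mathlib

section
/- For 0 ≤ i ≤ n and 0 ≤ k ≤ n, the Krawtchouk polynomials satisfy the reflection symmetry K_i(k, n) = (-1)^k · K_{n-i}(k, n). -/
open Finset

def K (i k n : ℕ) : ℤ :=
  ∑ j ∈ Finset.range (i + 1), (-1) ^ j * (Nat.choose k j) * (Nat.choose (n - k) (i - j))

/-! `K i k n` is the coefficient of `X ^ i` in `(1 - X) ^ k * (1 + X) ^ (n - k)`. Reversing this
polynomial of degree `n` replaces each factor `1 - X` by `X - 1` and fixes `1 + X`, so the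
reversed polynomial is `(-1) ^ k` times the original; comparing coefficients of `X ^ i` gives the
symmetry. -/

namespace Polynomial

variable {R : Type*}

theorem reflect_pow [Semiring R] {p : R[X]} {N : ℕ} (hp : p.natDegree ≤ N) (k : ℕ) :
    reflect (k * N) (p ^ k) = reflect N p ^ k := by
  induction k with
  | zero => simp [reflect_one]
  | succ k ih =>
    rw [pow_succ, pow_succ, add_mul, one_mul,
      reflect_mul _ _ (natDegree_pow_le.trans (Nat.mul_le_mul_left k hp)) hp, ih]

variable [CommRing R]

theorem coeff_neg_one_pow_mul (p : R[X]) (k i : ℕ) :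
    ((-1) ^ k * p).coeff i = (-1) ^ k * p.coeff i := by
  rw [← C_1, ← C_neg, ← C_pow, coeff_C_mul]

theorem coeff_one_sub_X_pow (k j : ℕ) :
    ((1 - X : R[X]) ^ k).coeff j = (-1) ^ j * k.choose j := by
  have h : (1 - X : R[X]) ^ k = (-1) ^ k * (X + C (-1)) ^ k := by
    rw [← mul_pow, C_neg, C_1]; congr 1; ring
  rw [h, coeff_neg_one_pow_mul, coeff_X_add_C_pow, ← mul_assoc, ← pow_add]
  rcases le_or_gt j k with hjk | hkj
  · rw [show k + (k - j) = j + 2 * (k - j) by omega, pow_add, pow_mul]; simp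
  · simp [Nat.choose_eq_zero_of_lt hkj]

theorem reflect_one_sub_X_pow_mul_one_add_X_pow (k m : ℕ) :
    reflect (k + m) ((1 - X : R[X]) ^ k * (1 + X) ^ m) =
      (-1) ^ k * ((1 - X) ^ k * (1 + X) ^ m) := by
  have h₁ : (1 - X : R[X]).natDegree ≤ 1 := by compute_degree
  have h₂ : (1 + X : R[X]).natDegree ≤ 1 := by compute_degree
  have h := reflect_mul _ _ (natDegree_pow_le_of_le k h₁) (natDegree_pow_le_of_le m h₂)
  rw [reflect_pow h₁, reflect_pow h₂, mul_one, mul_one] at h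
  rw [h, reflect_sub, reflect_add, reflect_one, reflect_one_X, pow_one, ← neg_sub, neg_pow,
    add_comm X]
  ring

end Polynomial

open Polynomial

theorem K_eq_coeff (i k n : ℕ) :
    K i k n = ((1 - X : ℤ[X]) ^ k * (1 + X) ^ (n - k)).coeff i := by
  rw [coeff_mul, Nat.sum_antidiagonal_eq_sum_range_succ
    (fun a b => ((1 - X : ℤ[X]) ^ k).coeff a * ((1 + X) ^ (n - k)).coeff b)]
  simp only [coeff_one_sub_X_pow, coeff_one_add_X_pow, K]

theorem K_sub_eq_neg_one_pow_mul {i k n : ℕ} (hi : i ≤ n) (hk : k ≤ n) :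
    K (n - i) k n = (-1) ^ k * K i k n := by
  have h := congrArg (coeff · i) (reflect_one_sub_X_pow_mul_one_add_X_pow (R := ℤ) k (n - k))
  simp only [Nat.add_sub_cancel' hk, coeff_reflect, revAt_le hi, coeff_neg_one_pow_mul] at h
  rwa [K_eq_coeff, K_eq_coeff]

theorem stmt2 (i k n : ℕ) (hi : i ≤ n) (hk : k ≤ n) :
    K i k n = (-1) ^ k * K (n - i) k n := by
  rw [K_sub_eq_neg_one_pow_mul hi hk, ← mul_assoc, ← mul_pow]
  norm_num
end

section
/- Let n be even. Then for every even index i = 2l with 0 ≤ i ≤ n, the absolute value of the middle-column Krawtchouk polynomial satisfies |K_{2l}(n/2, n)| = C(n/2, l). -/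
/-!
`K i k n` is the coefficient of `X ^ i` in `(1 - X) ^ k * (1 + X) ^ (n - k)`. In the middle column
`n = 2m`, `k = m` this product is `(1 - X ^ 2) ^ m`, whose coefficient of `X ^ (2l)` is
`(-1) ^ l * C(m, l)`.
-/

open Finset

open Polynomial

theorem Polynomial.coeff_one_sub_X_pow_s7 {R : Type*} [CommRing R] (m k : ℕ) :
    ((1 - X : R[X]) ^ m).coeff k = (-1) ^ k * m.choose k := by
  have : (1 - X : R[X]) ^ m = ((1 + X) ^ m).comp (C (-1) * X) := by simp [sub_eq_add_neg]
  rw [this, comp_C_mul_X_coeff, coeff_one_add_X_pow, mul_comm]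

theorem Polynomial.coeff_one_sub_X_sq_pow_two_mul {R : Type*} [CommRing R] (m l : ℕ) :
    ((1 - X ^ 2 : R[X]) ^ m).coeff (2 * l) = (-1) ^ l * m.choose l := by
  have : (1 - X ^ 2 : R[X]) ^ m = expand R 2 ((1 - X) ^ m) := by simp
  rw [this, coeff_expand two_pos, if_pos (dvd_mul_right 2 l), Nat.mul_div_cancel_left l two_pos,
    coeff_one_sub_X_pow_s7]

theorem K_two_mul_self (m l : ℕ) : K (2 * l) m (2 * m) = (-1) ^ l * m.choose l := by
  rw [K_eq_coeff, show 2 * m - m = m by omega, ← mul_pow, ← coeff_one_sub_X_sq_pow_two_mul]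
  ring_nf

theorem stmt7_general (n l : ℕ) (hn : Even n) :
    |K (2 * l) (n / 2) n| = (Nat.choose (n / 2) l : ℤ) := by
  obtain ⟨m, rfl⟩ := hn
  rw [← two_mul, Nat.mul_div_cancel_left m two_pos, K_two_mul_self, abs_mul, abs_neg_one_pow,
    one_mul, Nat.abs_cast]

theorem stmt7 (n l : ℕ) (hn : Even n) (hpos : 0 < n) (hl : 2 * l ≤ n) :
    |K (2 * l) (n / 2) n| = (Nat.choose (n / 2) l : ℤ) :=
  stmt7_general n l hn
end

section
/- For all n ≥ 1 and 0 ≤ w ≤ n, the binomial distribution probability at its mode satisfies C(n, w) · (w/n)^w · (1 - w/n)^{n-w} ≥ √(2/(nπ)) · c for some universal constant c > 0; in particular C(n, w) · (w/n)^w · (1 - w/n)^{n-w} = Ω(1/√n). (Conventions: 0^0 = 1 handles w = 0 and w = n.) -/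
/-!
Write `n = a + b` with `a, b ≥ 1`. Stirling's lower bound `√(2πn) (n/e)^n ≤ n!` and the crude upper
bound `m! ≤ e √m (m/e)^m` (the Stirling sequence decreases from its first term `e/√2`) give
`C(n, a) (a/n)^a (b/n)^b ≥ √(2πn) / (e² √(ab))`, because all the powers `(·/e)^·` cancel.
AM-GM `√(ab) ≤ n/2` turns this into `(2π/e²) √(2/(nπ))`, and `2π/e² > 1/2`. For `a = 0` or
`b = 0` the probability is `1`.
-/

open Real Nat Stirling

theorem factorial_le_exp_one_mul_sqrt {n : ℕ} (hn : n ≠ 0) :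
    (n ! : ℝ) ≤ exp 1 * √n * (n / exp 1) ^ n := by
  obtain ⟨k, rfl⟩ := exists_eq_succ_of_ne_zero hn
  have hseq : stirlingSeq (k + 1) ≤ exp 1 / √2 := by
    simpa [stirlingSeq_one] using stirlingSeq'_antitone (Nat.zero_le k)
  have hfac : ((k + 1)! : ℝ) =
      stirlingSeq (k + 1) * (√(2 * (k + 1 : ℕ)) * ((k + 1 : ℕ) / exp 1) ^ (k + 1)) := by
    rw [stirlingSeq, div_mul_cancel₀ _ (by positivity)]
  calc ((k + 1)! : ℝ)
      ≤ exp 1 / √2 * (√(2 * (k + 1 : ℕ)) * ((k + 1 : ℕ) / exp 1) ^ (k + 1)) := by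
        rw [hfac]; gcongr
    _ = exp 1 * √(k + 1 : ℕ) * ((k + 1 : ℕ) / exp 1) ^ (k + 1) := by
        rw [sqrt_mul zero_le_two]; field_simp

theorem add_div_pow_add_mul_pow_mul_pow {a b : ℕ} {x : ℝ} (hx : x ≠ 0) (hab : (a : ℝ) + b ≠ 0) :
    ((a + b) / x) ^ (a + b) * ((a / (a + b)) ^ a * (b / (a + b)) ^ b) =
      (a / x) ^ a * (b / x) ^ b := by
  rw [pow_add, mul_mul_mul_comm, ← mul_pow, ← mul_pow]
  congr 2 <;> field_simp

theorem sqrt_two_pi_mul_div_le_choose_mul_pow_mul_pow {a b : ℕ} (ha : a ≠ 0) (hb : b ≠ 0) :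
    √(2 * π * (a + b)) / (exp 1 ^ 2 * √(a * b)) ≤
      ((a + b).choose a : ℝ) * (a / (a + b)) ^ a * (b / (a + b)) ^ b := by
  have hab : (a : ℝ) + b ≠ 0 := by positivity
  set P := ((a : ℝ) / exp 1) ^ a * (b / exp 1) ^ b with hP_def
  have hP : 0 < P := by positivity
  have hnum :
      √(2 * π * (a + b)) * P ≤ ((a + b)! : ℝ) * ((a / (a + b)) ^ a * (b / (a + b)) ^ b) := by
    have := le_factorial_stirling (a + b)
    push_cast at this
    rw [hP_def, ← add_div_pow_add_mul_pow_mul_pow (exp_ne_zero 1) hab, ← mul_assoc]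
    gcongr
  have hden : (a ! * b ! : ℝ) ≤ exp 1 ^ 2 * √(a * b) * P := by
    calc (a ! * b ! : ℝ) ≤ (exp 1 * √a * (a / exp 1) ^ a) * (exp 1 * √b * (b / exp 1) ^ b) := by
          gcongr
          exacts [factorial_le_exp_one_mul_sqrt ha, factorial_le_exp_one_mul_sqrt hb]
      _ = exp 1 ^ 2 * √(a * b) * P := by rw [sqrt_mul (by positivity)]; ring
  calc √(2 * π * (a + b)) / (exp 1 ^ 2 * √(a * b))
      = √(2 * π * (a + b)) * P / (exp 1 ^ 2 * √(a * b) * P) := by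
        rw [mul_div_mul_right _ _ hP.ne']
    _ ≤ ((a + b)! : ℝ) * ((a / (a + b)) ^ a * (b / (a + b)) ^ b) / (a ! * b !) := by
        gcongr
    _ = ((a + b).choose a : ℝ) * (a / (a + b)) ^ a * (b / (a + b)) ^ b := by
        rw [cast_add_choose]; ring

theorem sqrt_mul_le_add_div_two {x y : ℝ} (hx : 0 ≤ x) (hy : 0 ≤ y) : √(x * y) ≤ (x + y) / 2 :=
  sqrt_le_iff.mpr ⟨by positivity, by nlinarith [sq_nonneg (x - y)]⟩

theorem sqrt_two_div_mul_le_choose_mul_pow_mul_pow {a b : ℕ} (ha : a ≠ 0) (hb : b ≠ 0) :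
    √(2 / ((a + b) * π)) * (2 * π / exp 1 ^ 2) ≤
      ((a + b).choose a : ℝ) * (a / (a + b)) ^ a * (b / (a + b)) ^ b := by
  refine le_trans ?_ (sqrt_two_pi_mul_div_le_choose_mul_pow_mul_pow ha hb)
  set n : ℝ := a + b
  have hn0 : 0 < n := by positivity
  have hsqrt : √(2 * π * n) = √(2 / (n * π)) * (π * n) := by
    rw [show 2 * π * n = 2 / (n * π) * (π * n) ^ 2 by field_simp, sqrt_mul (by positivity),
      sqrt_sq (by positivity)]
  calc √(2 / (n * π)) * (2 * π / exp 1 ^ 2) = √(2 * π * n) / (exp 1 ^ 2 * (n / 2)) := by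
        rw [hsqrt]; field_simp
    _ ≤ √(2 * π * n) / (exp 1 ^ 2 * √(a * b)) := by
        gcongr
        exact sqrt_mul_le_add_div_two (by positivity) (by positivity)

theorem sqrt_two_div_mul_half_le_one {n : ℕ} (hn : 1 ≤ n) : √(2 / (n * π)) * (1 / 2) ≤ 1 := by
  have hn' : (1 : ℝ) ≤ n := by exact_mod_cast hn
  have : √(2 / (n * π)) ≤ 1 :=
    sqrt_le_one.mpr ((div_le_one (by positivity)).mpr (by nlinarith [pi_gt_three]))
  linarith

theorem half_le_two_pi_div_exp_one_sq : (1 / 2 : ℝ) ≤ 2 * π / exp 1 ^ 2 := by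
  have he : exp 1 < 3 := lt_trans exp_one_lt_d9 (by norm_num)
  rw [le_div_iff₀ (by positivity)]
  nlinarith [pi_gt_three, exp_pos 1]

theorem stmt18 :
    ∃ c : ℝ, 0 < c ∧ ∀ n w : ℕ, 1 ≤ n → w ≤ n →
      (Nat.choose n w : ℝ) * ((w : ℝ) / n) ^ w * (1 - (w : ℝ) / n) ^ (n - w) ≥
        Real.sqrt (2 / (n * Real.pi)) * c := by
  refine ⟨1 / 2, by norm_num, fun n w hn hw => ?_⟩
  obtain ⟨b, rfl⟩ := Nat.exists_eq_add_of_le hw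
  rcases Nat.eq_zero_or_pos w with rfl | hw0
  · simpa using sqrt_two_div_mul_half_le_one hn
  rcases Nat.eq_zero_or_pos b with rfl | hb0
  · simpa [div_self (by positivity : (w : ℝ) ≠ 0)] using sqrt_two_div_mul_half_le_one hn
  have hsub : 1 - (w : ℝ) / ↑(w + b) = b / (w + b) := by push_cast; field_simp; ring
  rw [hsub, Nat.add_sub_cancel_left, ge_iff_le]
  push_cast
  calc √(2 / ((w + b) * π)) * (1 / 2) ≤ √(2 / ((w + b) * π)) * (2 * π / exp 1 ^ 2) :=
        mul_le_mul_of_nonneg_left half_le_two_pi_div_exp_one_sq (sqrt_nonneg _)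
    _ ≤ _ := sqrt_two_div_mul_le_choose_mul_pow_mul_pow hw0.ne' hb0.ne'
end
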